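/- arXiv:2412.10655 — 2 statements merged into one kernel-verified Lean document; each statement's English description precedes it below -/
import Mathlib

section
/- For all sufficiently large natural numbers n and every natural number t with t ≥ 10·log₂ n, ∑_{i=⌈n/2⌉}^{n} (n choose i)·(n choose (i−1))·((i−1)/n)^{i·t} ≤ 1/n, where the sum and all terms are taken over the real numbers. -/
/-! Write `i = n + 1 - k` with `1 ≤ k`. Then `C(n, i) ≤ n ^ (k - 1)`, `C(n, i - 1) ≤ n ^ k`, and
`((i - 1) / n) ^ (i t) = (1 - k / n) ^ (i t) ≤ exp (-k i t / n) ≤ n ^ (-5 k)` because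
`i t ≥ (n / 2) · 10 log n`. So each term is at most `n ^ (2k - 1 - 5k) ≤ n ^ (-4)`, and the
at most `n + 1` terms sum to at most `(n + 1) / n ^ 4 ≤ 1 / n`. -/

open Real

lemma choose_le_pow_sub {n k : ℕ} (h : k ≤ n) : n.choose k ≤ n ^ (n - k) := by
  rw [← Nat.choose_symm h]
  exact Nat.choose_le_pow n (n - k)

lemma one_sub_pow_le_exp_neg_mul {x : ℝ} (hx : 0 ≤ 1 - x) (m : ℕ) :
    (1 - x) ^ m ≤ exp (-(m * x)) := by
  rw [← mul_neg, exp_nat_mul]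
  exact pow_le_pow_left₀ hx (one_sub_le_exp_neg x) m

lemma log_le_logb_two {x : ℝ} (hx : 1 ≤ x) : log x ≤ logb 2 x := by
  have hlog2 : log 2 ≤ 1 := by linarith [log_two_lt_d9]
  rw [logb, le_div_iff₀ (log_pos one_lt_two)]
  nlinarith [log_nonneg hx]

lemma sub_one_div_pow_le_inv_pow {n i m c : ℕ} (hn : 0 < n) (hi : 1 ≤ i) (hin : i ≤ n + 1)
    (hm : c * n * log n ≤ m) :
    (((i : ℝ) - 1) / n) ^ m ≤ ((n : ℝ) ^ (c * (n + 1 - i)))⁻¹ := by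
  set k := n + 1 - i with hk
  have hn' : (0 : ℝ) < n := by exact_mod_cast hn
  have hkR : (k : ℝ) = n + 1 - i := by rw [hk, Nat.cast_sub hin]; push_cast; ring
  have hratio : ((i : ℝ) - 1) / n = 1 - k / n := by field_simp; linarith
  have hratio_nonneg : 0 ≤ 1 - (k : ℝ) / n :=
    hratio ▸ div_nonneg (sub_nonneg.2 (mod_cast hi)) hn'.le
  have hexponent : (c * k : ℕ) * log n ≤ m * (k / n) := by
    rw [mul_div_assoc', le_div_iff₀ hn']
    push_cast
    nlinarith [mul_le_mul_of_nonneg_right hm (Nat.cast_nonneg (α := ℝ) k)]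
  calc (((i : ℝ) - 1) / n) ^ m
      ≤ exp (-(m * (k / n))) := by
        rw [hratio]
        exact one_sub_pow_le_exp_neg_mul hratio_nonneg m
    _ ≤ exp (-((c * k : ℕ) * log n)) := by gcongr
    _ = ((n : ℝ) ^ (c * k))⁻¹ := by rw [exp_neg, exp_nat_mul, exp_log hn']

lemma choose_mul_choose_mul_pow_le {n i t : ℕ} (hn : 0 < n) (hi : n ≤ 2 * i) (hin : i ≤ n)
    (ht : 10 * log n ≤ t) :
    (n.choose i : ℝ) * n.choose (i - 1) * (((i : ℝ) - 1) / n) ^ (i * t) ≤ ((n : ℝ) ^ 4)⁻¹ := by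
  have hn1 : (1 : ℝ) ≤ n := by exact_mod_cast hn
  have hit : 5 * n * log n ≤ (i * t : ℕ) := by
    have h2i : (n : ℝ) ≤ 2 * i := by exact_mod_cast hi
    push_cast
    nlinarith [log_nonneg hn1, mul_le_mul_of_nonneg_left ht (Nat.cast_nonneg (α := ℝ) i)]
  have hpow := sub_one_div_pow_le_inv_pow (i := i) (c := 5) hn (by omega) (by omega) hit
  set k := n + 1 - i with hk
  have hbinom : (n.choose i : ℝ) * n.choose (i - 1) ≤ (n : ℝ) ^ (k - 1) * n ^ k := by
    have h₁ : n - i = k - 1 := by omega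
    have h₂ : n - (i - 1) = k := by omega
    exact_mod_cast Nat.mul_le_mul (h₁ ▸ choose_le_pow_sub hin) (h₂ ▸ choose_le_pow_sub (by omega))
  have hexp : (n : ℝ) ^ (k - 1) * n ^ k * n ^ (3 * k + 1) = n ^ (5 * k) := by
    rw [← pow_add, ← pow_add]
    congr 1
    omega
  calc (n.choose i : ℝ) * n.choose (i - 1) * (((i : ℝ) - 1) / n) ^ (i * t)
      ≤ (n : ℝ) ^ (k - 1) * n ^ k * ((n : ℝ) ^ (5 * k))⁻¹ := by
        have hratio : (0 : ℝ) ≤ ((i : ℝ) - 1) / n :=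
          div_nonneg (sub_nonneg.2 (mod_cast (by omega : 1 ≤ i))) (by positivity)
        exact mul_le_mul hbinom hpow (pow_nonneg hratio _) (by positivity)
    _ = ((n : ℝ) ^ (3 * k + 1))⁻¹ := by
        rw [← hexp]
        field_simp
    _ ≤ ((n : ℝ) ^ 4)⁻¹ := by
        gcongr
        omega

lemma add_one_mul_inv_pow_four_le {x : ℝ} (hx : 2 ≤ x) : (x + 1) * (x ^ 4)⁻¹ ≤ 1 / x := by
  rw [← div_eq_mul_inv, div_le_div_iff₀ (by positivity) (by positivity)]
  nlinarith [mul_le_mul hx hx (by norm_num) (by linarith)]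

/-- The "large sets" part of the union bound: for all sufficiently large `n`
and `t ≥ 10·log₂ n`,
`∑_{i=⌈n/2⌉}^{n} (n choose i)(n choose (i−1))((i−1)/n)^{i·t} ≤ 1/n`. -/
theorem hall_union_bound_large_sets :
    ∀ᶠ n : ℕ in Filter.atTop, ∀ t : ℕ, 10 * Real.logb 2 n ≤ (t : ℝ) →
      ∑ i ∈ Finset.Icc ((n + 1) / 2) n,
          (n.choose i : ℝ) * (n.choose (i - 1) : ℝ)
            * (((i : ℝ) - 1) / (n : ℝ)) ^ (i * t)
        ≤ 1 / (n : ℝ) := by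
  filter_upwards [Filter.eventually_ge_atTop 2] with n hn t ht
  have hn2 : (2 : ℝ) ≤ n := by exact_mod_cast hn
  have hlog : 10 * log n ≤ t :=
    (mul_le_mul_of_nonneg_left (log_le_logb_two (by linarith)) (by norm_num)).trans ht
  calc ∑ i ∈ Finset.Icc ((n + 1) / 2) n,
          (n.choose i : ℝ) * (n.choose (i - 1) : ℝ) * (((i : ℝ) - 1) / (n : ℝ)) ^ (i * t)
      ≤ ∑ _i ∈ Finset.Icc ((n + 1) / 2) n, ((n : ℝ) ^ 4)⁻¹ := by
        refine Finset.sum_le_sum fun i hi => ?_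
        rw [Finset.mem_Icc] at hi
        exact choose_mul_choose_mul_pow_le (by omega) (by omega) hi.2 hlog
    _ ≤ (n + 1) * ((n : ℝ) ^ 4)⁻¹ := by
        rw [Finset.sum_const, nsmul_eq_mul, Nat.card_Icc]
        gcongr
        exact_mod_cast Nat.sub_le (n + 1) ((n + 1) / 2)
    _ ≤ 1 / n := add_one_mul_inv_pow_four_le hn2
end

section
/- For all sufficiently large natural numbers n the following holds with t = ⌈10·log₂ n⌉. For each i ∈ {1,…,n} sample t indices p_{i,1},…,p_{i,t} ∈ {1,…,n} independently and uniformly at random (all n·t samples independent). Then with probability at least 1 − 2/n there exists a permutation σ of {1,…,n} such that σ(i) ∈ {p_{i,1},…,p_{i,t}} for every i; that is, the random bipartite graph in which the left vertex i is joined to the right vertices p_{i,1},…,p_{i,t} contains a perfect matching. -/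
/-!
If no such permutation exists, Hall's theorem yields a set `S` of `k + 1` left vertices all of
whose `(k + 1) t` samples land in a set `T` of `k` right vertices. A union bound over `(S, T)`
bounds the probability of this by `∑ₖ C(n, k+1) C(n, k) (k/n)^((k+1) t)`. With
`ℓ = min (k + 1) (n - k)`, the binomials are at most `n ^ (2ℓ)`, and
`(k/n)^(k+1) ≤ exp (-(k+1)(n-k)/n) ≤ exp (-ℓ/2)`; as `t ≥ 14 log n`, each term is at most
`n ^ (-5ℓ) ≤ n ^ (-5)`, so the failure probability is at most `n ^ (-4) ≤ 2 / n`.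
-/

open Finset Real

theorem exists_hall_obstruction_of_not_exists_perm {α ι : Type*} [Fintype α] [DecidableEq α]
    [Fintype ι] {ω : α → ι → α}
    (h : ¬ ∃ σ : Equiv.Perm α, ∀ i, ∃ j, ω i j = σ i) :
    ∃ S T : Finset α, #T + 1 = #S ∧ ∀ i ∈ S, ∀ j, ω i j ∈ T := by
  contrapose! h
  have hall : ∀ S : Finset α, #S ≤ #(S.biUnion fun i => univ.image (ω i)) := by
    intro S
    by_contra! hlt
    obtain ⟨T, hNT, -, hT⟩ := exists_subsuperset_card_eq (subset_univ _)
      (Nat.le_sub_one_of_lt hlt) ((Nat.sub_le _ _).trans (card_le_univ S))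
    obtain ⟨i, hi, j, hj⟩ := h S T (by omega)
    exact hj (hNT (mem_biUnion.2 ⟨i, hi, mem_image_of_mem _ (mem_univ j)⟩))
  obtain ⟨f, hf, hfω⟩ := (all_card_le_biUnion_card_iff_exists_injective _).1 hall
  refine ⟨Equiv.ofBijective f (Finite.injective_iff_bijective.1 hf), fun i => ?_⟩
  obtain ⟨j, -, hj⟩ := mem_image.1 (hfω i)
  exact ⟨j, hj⟩

theorem card_filter_forall_mem {α ι β : Type*} [Fintype α] [DecidableEq α] [Fintype ι]
    [DecidableEq ι] [Fintype β] [DecidableEq β] (S : Finset α) (T : Finset β) :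
    #{ω : α → ι → β | ∀ i ∈ S, ∀ j, ω i j ∈ T}
      = (#T ^ Fintype.card ι) ^ #S
        * (Fintype.card β ^ Fintype.card ι) ^ (Fintype.card α - #S) := by
  have : ({ω : α → ι → β | ∀ i ∈ S, ∀ j, ω i j ∈ T} : Finset (α → ι → β))
      = Fintype.piFinset fun i => if i ∈ S then Fintype.piFinset fun _ : ι => T else univ := by
    ext ω
    simp only [mem_filter, mem_univ, true_and, Fintype.mem_piFinset]
    refine ⟨fun h i => ?_, fun h i hi => ?_⟩
    · split_ifs with hi
      · exact Fintype.mem_piFinset.2 (h i hi)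
      · exact mem_univ _
    · simpa [hi] using h i
  rw [this, Fintype.card_piFinset]
  simp only [apply_ite card, Fintype.card_piFinset, prod_const, card_univ]
  rw [prod_ite, prod_const, prod_const, filter_mem_eq_inter, univ_inter, filter_not,
    filter_mem_eq_inter, univ_inter, ← compl_eq_univ_sdiff, card_compl, Fintype.card_fun]

theorem card_filter_not_exists_perm_le {α ι : Type*} [Fintype α] [DecidableEq α] [Fintype ι]
    [DecidableEq ι] :
    #{ω : α → ι → α | ¬ ∃ σ : Equiv.Perm α, ∀ i, ∃ j, ω i j = σ i}
      ≤ ∑ k ∈ range (Fintype.card α), (Fintype.card α).choose (k + 1) * (Fintype.card α).choose k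
          * ((k ^ Fintype.card ι) ^ (k + 1)
            * (Fintype.card α ^ Fintype.card ι) ^ (Fintype.card α - (k + 1))) := by
  set N := Fintype.card α
  let E : Finset α × Finset α → Finset (α → ι → α) :=
    fun ST => {ω | ∀ i ∈ ST.1, ∀ j, ω i j ∈ ST.2}
  have hcover : ({ω : α → ι → α | ¬ ∃ σ : Equiv.Perm α, ∀ i, ∃ j, ω i j = σ i} : Finset _)
      ⊆ (range N).biUnion fun k =>
          (powersetCard (k + 1) univ ×ˢ powersetCard k univ).biUnion E := by
    intro ω hω
    obtain ⟨S, T, hST, hω⟩ := exists_hall_obstruction_of_not_exists_perm (mem_filter.1 hω).2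
    have hSN : #S ≤ N := card_le_univ S
    simp only [mem_biUnion, mem_range, mem_product, mem_powersetCard, subset_univ, true_and]
    exact ⟨#T, by omega, (S, T), ⟨hST.symm, rfl⟩, mem_filter.2 ⟨mem_univ _, hω⟩⟩
  calc _ ≤ _ := card_le_card hcover
    _ ≤ ∑ k ∈ range N, ∑ ST ∈ powersetCard (k + 1) univ ×ˢ powersetCard k univ, #(E ST) :=
        card_biUnion_le.trans (sum_le_sum fun _ _ => card_biUnion_le)
    _ = _ := by
        refine sum_congr rfl fun k _ => ?_
        rw [sum_congr rfl fun ST hST => ?_, sum_const, card_product, card_powersetCard,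
          card_powersetCard, card_univ, smul_eq_mul]
        obtain ⟨⟨-, hS⟩, -, hT⟩ := mem_product.1 hST |>.imp mem_powersetCard.1 mem_powersetCard.1
        rw [card_filter_forall_mem, hS, hT]

theorem Nat.choose_le_pow_min (n j : ℕ) : n.choose j ≤ n ^ min j (n - j) := by
  rcases lt_or_ge n j with hnj | hjn
  · simp [Nat.choose_eq_zero_of_lt hnj]
  rcases le_total j (n - j) with h | h
  · rw [min_eq_left h]
    exact Nat.choose_le_pow n j
  · rw [min_eq_right h, ← Nat.choose_symm hjn]
    exact Nat.choose_le_pow n (n - j)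

theorem Nat.choose_succ_mul_choose_le_pow_min (n k : ℕ) :
    n.choose (k + 1) * n.choose k ≤ n ^ (2 * min (k + 1) (n - k)) := by
  rcases Nat.eq_zero_or_pos n with rfl | hn
  · simp
  rw [two_mul, pow_add]
  exact Nat.mul_le_mul
    ((Nat.choose_le_pow_min n (k + 1)).trans (Nat.pow_le_pow_right hn (by omega)))
    ((Nat.choose_le_pow_min n k).trans (Nat.pow_le_pow_right hn (by omega)))

theorem div_pow_succ_le_exp_neg_min {n k : ℕ} (hk : k < n) :
    ((k : ℝ) / n) ^ (k + 1) ≤ exp (-(min (k + 1) (n - k) : ℕ) / 2) := by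
  have hn : (0 : ℝ) < n := by exact_mod_cast hk.trans_le' k.zero_le
  have hmin : min (k + 1) (n - k) * n ≤ (k + 1) * (n - k) * 2 := by
    obtain ⟨m, rfl⟩ := Nat.exists_eq_add_of_lt hk
    rw [show k + m + 1 - k = m + 1 by omega]
    rcases le_total (k + 1) (m + 1) with h | h
    · rw [min_eq_left h]; nlinarith
    · rw [min_eq_right h]; nlinarith
  have hstep : (k : ℝ) / n ≤ exp (-((n - k : ℕ) : ℝ) / n) := by
    have := add_one_le_exp (-((n - k : ℕ) : ℝ) / n)
    rw [Nat.cast_sub hk.le] at this ⊢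
    field_simp at this ⊢
    linarith
  calc ((k : ℝ) / n) ^ (k + 1) ≤ exp (-((n - k : ℕ) : ℝ) / n) ^ (k + 1) := by gcongr
    _ = exp (-((k + 1) * (n - k) : ℕ) / n) := by
        rw [← exp_nat_mul]; push_cast; ring_nf
    _ ≤ exp (-(min (k + 1) (n - k) : ℕ) / 2) := by
        rw [exp_le_exp, neg_div, neg_div, neg_le_neg_iff, div_le_div_iff₀ two_pos hn]
        exact_mod_cast hmin

theorem choose_succ_mul_choose_mul_div_pow_le {n k t : ℕ} (hk : k < n)
    (ht : 14 * log n ≤ t) :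
    (n.choose (k + 1) * n.choose k : ℝ) * (((k : ℝ) / n) ^ (k + 1)) ^ t ≤ ((n : ℝ) ^ 5)⁻¹ := by
  set ℓ := min (k + 1) (n - k)
  have hn : (1 : ℝ) ≤ n := by exact_mod_cast hk.trans_le' k.zero_le
  have hchoose : (n.choose (k + 1) * n.choose k : ℝ) ≤ ((n : ℝ) ^ 2) ^ ℓ := by
    rw [← pow_mul]
    exact_mod_cast Nat.choose_succ_mul_choose_le_pow_min n k
  have hexp : exp (-(t : ℝ) / 2) ≤ ((n : ℝ) ^ 7)⁻¹ := by
    rw [← exp_log (one_pos.trans_le hn), ← exp_nat_mul, ← exp_neg, exp_le_exp]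
    push_cast
    linarith
  calc (n.choose (k + 1) * n.choose k : ℝ) * (((k : ℝ) / n) ^ (k + 1)) ^ t
      ≤ ((n : ℝ) ^ 2) ^ ℓ * exp (-(ℓ : ℝ) / 2) ^ t := by
        gcongr
        exact div_pow_succ_le_exp_neg_min hk
    _ = ((n : ℝ) ^ 2) ^ ℓ * exp (-(t : ℝ) / 2) ^ ℓ := by
        rw [← exp_nat_mul, ← exp_nat_mul]; ring_nf
    _ ≤ ((n : ℝ) ^ 2) ^ ℓ * ((n : ℝ) ^ 7)⁻¹ ^ ℓ := by gcongr
    _ = ((n : ℝ) ^ 5)⁻¹ ^ ℓ := by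
        rw [← mul_pow]; congr 1; field_simp
    _ ≤ ((n : ℝ) ^ 5)⁻¹ :=
        pow_le_of_le_one (by positivity) (inv_le_one_of_one_le₀ (one_le_pow₀ hn)) (by omega)

theorem card_filter_not_exists_perm_le_inv_pow_mul_card {n t : ℕ} (ht : 14 * log n ≤ t) :
    (#{ω : Fin n → Fin t → Fin n | ¬ ∃ σ : Equiv.Perm (Fin n), ∀ i, ∃ j, ω i j = σ i} : ℝ)
      ≤ ((n : ℝ) ^ 4)⁻¹ * Fintype.card (Fin n → Fin t → Fin n) := by
  have hcard : (Fintype.card (Fin n → Fin t → Fin n) : ℝ) = ((n : ℝ) ^ t) ^ n := by simp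
  have hterm : ∀ k ∈ range n,
      ((n.choose (k + 1) * n.choose k * ((k ^ t) ^ (k + 1) * (n ^ t) ^ (n - (k + 1))) : ℕ) : ℝ)
        = (n.choose (k + 1) * n.choose k : ℝ) * (((k : ℝ) / n) ^ (k + 1)) ^ t
          * Fintype.card (Fin n → Fin t → Fin n) := by
    intro k hk
    have hkn : k + 1 ≤ n := mem_range.1 hk
    have hn : (n : ℝ) ≠ 0 := Nat.cast_ne_zero.2 (by omega)
    have hpow : ((n : ℝ) ^ t) ^ n = ((n : ℝ) ^ t) ^ (k + 1) * ((n : ℝ) ^ t) ^ (n - (k + 1)) := by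
      rw [← pow_add, Nat.add_sub_cancel' hkn]
    have hdiv : (((k : ℝ) / n) ^ (k + 1)) ^ t
        = ((k : ℝ) ^ t) ^ (k + 1) / ((n : ℝ) ^ t) ^ (k + 1) := by
      rw [← div_pow, ← div_pow, ← pow_mul, ← pow_mul, mul_comm]
    rw [hcard, hdiv, hpow]
    push_cast
    field_simp
  have hnat : #{ω : Fin n → Fin t → Fin n | ¬ ∃ σ : Equiv.Perm (Fin n), ∀ i, ∃ j, ω i j = σ i}
      ≤ ∑ k ∈ range n,
          n.choose (k + 1) * n.choose k * ((k ^ t) ^ (k + 1) * (n ^ t) ^ (n - (k + 1))) := by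
    -- `convert` reconciles the generic decidability instances with the `Fin`-specific ones
    convert card_filter_not_exists_perm_le (α := Fin n) (ι := Fin t) using 3 <;>
      simp only [Fintype.card_fin]
  calc (#{ω : Fin n → Fin t → Fin n | ¬ ∃ σ : Equiv.Perm (Fin n), ∀ i, ∃ j, ω i j = σ i} : ℝ)
      ≤ _ := Nat.cast_le.2 hnat
    _ = ∑ k ∈ range n, (n.choose (k + 1) * n.choose k : ℝ) * (((k : ℝ) / n) ^ (k + 1)) ^ t
          * Fintype.card (Fin n → Fin t → Fin n) := by
        rw [Nat.cast_sum]
        exact sum_congr rfl hterm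
    _ ≤ ∑ _k ∈ range n, ((n : ℝ) ^ 5)⁻¹ * Fintype.card (Fin n → Fin t → Fin n) :=
        sum_le_sum fun k hk => by
          gcongr
          exact choose_succ_mul_choose_mul_div_pow_le (mem_range.1 hk) ht
    _ = ((n : ℝ) ^ 4)⁻¹ * Fintype.card (Fin n → Fin t → Fin n) := by
        have hn : (n : ℝ) * ((n : ℝ) ^ 5)⁻¹ = ((n : ℝ) ^ 4)⁻¹ := by
          rcases eq_or_ne (n : ℝ) 0 with hn | hn
          · simp [hn]
          · field_simp
        rw [sum_const, card_range, nsmul_eq_mul, ← mul_assoc, hn]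

theorem fourteen_mul_log_le_ceil_ten_mul_logb (n : ℕ) :
    14 * log n ≤ ⌈10 * logb 2 n⌉₊ := by
  have hlog2 : log 2 < 0.7 := log_two_lt_d9.trans (by norm_num)
  have hlogn : 0 ≤ log n := log_natCast_nonneg n
  calc 14 * log n ≤ 10 * (log n / log 2) := by
        rw [mul_div_assoc', le_div_iff₀ (log_pos one_lt_two)]
        nlinarith
    _ ≤ ⌈10 * logb 2 n⌉₊ := Nat.le_ceil _

/-- **Random sparse bipartite graphs have perfect matchings whp.**
For all sufficiently large `n`, with `t = ⌈10·log₂ n⌉`, if each left vertex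
`i ∈ {1,…,n}` independently samples `t` uniform right neighbours
`p_{i,1},…,p_{i,t}`, then with probability at least `1 − 2/n` there is a
permutation `σ` with `σ(i)` among the samples of `i` for every `i`.
Probability is measured by counting sample points `ω : Fin n → Fin t → Fin n`. -/
theorem random_bipartite_graph_has_perfect_matching :
    ∀ᶠ n : ℕ in Filter.atTop, ∀ t : ℕ, t = ⌈10 * Real.logb 2 n⌉₊ →
      (1 - 2 / (n : ℝ)) * (Fintype.card (Fin n → Fin t → Fin n) : ℝ)
        ≤ ((Finset.univ.filter (fun ω : Fin n → Fin t → Fin n =>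
              ∃ σ : Equiv.Perm (Fin n), ∀ i : Fin n, ∃ j : Fin t, ω i j = σ i)).card : ℝ) := by
  filter_upwards [Filter.eventually_ge_atTop 1] with n hn t ht
  have hbad := card_filter_not_exists_perm_le_inv_pow_mul_card
    (ht ▸ fourteen_mul_log_le_ceil_ten_mul_logb n)
  have hsplit :
      (#{ω : Fin n → Fin t → Fin n | ∃ σ : Equiv.Perm (Fin n), ∀ i, ∃ j, ω i j = σ i} : ℝ)
        + #{ω : Fin n → Fin t → Fin n | ¬ ∃ σ : Equiv.Perm (Fin n), ∀ i, ∃ j, ω i j = σ i}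
        = Fintype.card (Fin n → Fin t → Fin n) := by
    rw [← card_univ, ← Nat.cast_add, card_filter_add_card_filter_not]
  have hinv : ((n : ℝ) ^ 4)⁻¹ ≤ 2 / n := by
    have hn : (1 : ℝ) ≤ n := by exact_mod_cast hn
    calc ((n : ℝ) ^ 4)⁻¹ ≤ (n : ℝ)⁻¹ := inv_anti₀ (by positivity) (le_self_pow₀ hn (by norm_num))
      _ ≤ 2 / n := by rw [div_eq_mul_inv]; linarith [inv_nonneg.2 (zero_le_one.trans hn)]
  have hinv_mul := mul_le_mul_of_nonneg_right hinv
    (Nat.cast_nonneg (α := ℝ) (Fintype.card (Fin n → Fin t → Fin n)))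
  rw [sub_mul, one_mul]
  linarith
end
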